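/- In any safe execution, each process u ≠ r executes rule RC5 at most once in a configuration where it satisfies both Conflict(u) and inLegalTree(u); consequently every safe execution has a suffix where no process executes RC5 while satisfying Conflict and inLegalTree. -/

import Mathlib

namespace BFS

inductive Status : Type
  | Idle | Working | Power | WeakE | StrongE
deriving DecidableEq

open Status

inductive Rule (V : Type) : Type
  | RC1 | RC2 | RC3 | RC4 | RC5 | RC6
  | R1 | R2
  | R3 (v : V)
  | R4 | R5 | R6 | R7
deriving DecidableEq

structure ProcState (V : Type) where
  P : Option V
  TS : Option V
  C : Bool
  S : Status
  ph : Bool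

abbrev Config (V : Type) := V → ProcState V

variable {V : Type} [Fintype V] [DecidableEq V]

/-- Erroneous statuses. -/
def Erroneous (s : Status) : Prop := s = WeakE ∨ s = StrongE

/-- The children of `u`: neighbors whose parent pointer designates `u`. -/
def Child (G : SimpleGraph V) (c : Config V) (u : V) : Set V :=
  {v | G.Adj u v ∧ (c v).P = some u}

/-- Closed neighborhood `N[u]`. -/
def ClosedNbr (G : SimpleGraph V) (u : V) : Set V := insert u (G.neighborSet u)

def StrongConflict (G : SimpleGraph V) (c : Config V) (u : V) : Prop :=
  (c u).S ≠ StrongE ∧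
    ∃ w ∈ ClosedNbr G u, ∃ v ∈ ClosedNbr G u,
      (c v).C ≠ (c u).C ∧ (c w).S = Power ∧ (c v).S = Power

def Conflict (G : SimpleGraph V) (r : V) (c : Config V) (u : V) : Prop :=
  (u ≠ r ∧ (c u).P ≠ none ∧
      ∃ v ∈ G.neighborSet u, (c v).S = Power ∧ (c v).C ≠ (c u).C) ∨
  (u = r ∧ (c u).S ≠ StrongE ∧
      ∃ v ∈ G.neighborSet u, (c v).S = Power ∧
        ((c v).C ≠ (c u).C ∨ Child G c u = ∅))

def Detached (G : SimpleGraph V) (r : V) (c : Config V) (u : V) : Prop :=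
  Child G c u = ∅ ∧ ((c u).P = none ∨ u = r) ∧ (c u).S ≠ Power

def StrongEReady (G : SimpleGraph V) (c : Config V) (u : V) : Prop :=
  (c u).S = StrongE ∧ ∀ v ∈ G.neighborSet u, (c v).S ≠ Power

def PowerFaulty (G : SimpleGraph V) (c : Config V) (u : V) : Prop :=
  (c u).S = Power ∧ ∃ v ∈ G.neighborSet u, (c v).S = StrongE

def Faulty (G : SimpleGraph V) (r : V) (c : Config V) (u : V) : Prop :=
  u ≠ r ∧ ∃ p, (c u).P = some p ∧ ¬ Erroneous (c p).S ∧
    (Erroneous (c u).S ∨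
     (c u).C ≠ (c p).C ∨
     ((c p).S ≠ Working ∧ (c u).S ≠ Idle) ∨
     ((c p).S = (c u).S ∧ (c u).ph ≠ (c p).ph) ∨
     ((c u).S = Power ∧ (c u).ph ≠ (c p).ph) ∨
     ((c p).S = Power ∧ (Child G c u ≠ ∅ ∨ (c u).ph ≠ (c p).ph)))

def IllegalRoot (G : SimpleGraph V) (r : V) (c : Config V) (u : V) : Prop :=
  u ≠ r ∧ (c u).P = none ∧ ¬ Detached G r c u

def IllegalLiveRoot (G : SimpleGraph V) (r : V) (c : Config V) (u : V) : Prop :=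
  IllegalRoot G r c u ∧ ¬ Erroneous (c u).S

def IllegalChild (r : V) (c : Config V) (u : V) : Prop :=
  u ≠ r ∧ ∃ p, (c u).P = some p ∧ Erroneous (c p).S

def Isolated (G : SimpleGraph V) (c : Config V) (u : V) : Prop :=
  (c u).S = WeakE ∨ (c u).S = Working ∨ StrongEReady G c u

def Ok (G : SimpleGraph V) (r : V) (c : Config V) (u : V) : Prop :=
  ¬ StrongConflict G c u ∧ ¬ Conflict G r c u ∧ ¬ PowerFaulty G c u ∧
  ¬ Faulty G r c u ∧ ¬ IllegalRoot G r c u ∧ ¬ IllegalChild r c u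

def QuietSubTree (G : SimpleGraph V) (c : Config V) (u : V) : Prop :=
  ∀ v ∈ Child G c u, (c v).S = Idle ∧ (c v).ph = (c u).ph

def EndFirstPhase (G : SimpleGraph V) (c : Config V) (u : V) : Prop :=
  (c u).S = Power ∧ QuietSubTree G c u ∧ ∀ v ∈ G.neighborSet u, (c v).C = (c u).C

def EndPhase (G : SimpleGraph V) (c : Config V) (u : V) : Prop :=
  (c u).S = Working ∧ QuietSubTree G c u

def EndLastPhase (G : SimpleGraph V) (c : Config V) (u : V) : Prop :=
  Child G c u = ∅ ∧ (EndFirstPhase G c u ∨ EndPhase G c u)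

def EndIntermediatePhase (G : SimpleGraph V) (c : Config V) (u : V) : Prop :=
  Child G c u ≠ ∅ ∧ (EndFirstPhase G c u ∨ EndPhase G c u)

def Connection (G : SimpleGraph V) (r : V) (c : Config V) (u v : V) : Prop :=
  Detached G r c u ∧ (Isolated G c u ∨ (c u).S = Idle) ∧
  G.Adj u v ∧ (c v).C ≠ (c u).C ∧ (c v).S = Power

def NewPhase (G : SimpleGraph V) (c : Config V) (u : V) : Prop :=
  ∃ p, (c u).P = some p ∧ QuietSubTree G c u ∧ (c u).S = Idle ∧ (c u).ph ≠ (c p).ph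

/-- Guards of the rules RC1–RC6, R1–R7 of the algorithm. -/
def Guard (G : SimpleGraph V) (r : V) : Rule V → Config V → V → Prop
  | .RC1, c, u => u = r ∧ ¬ Conflict G r c u ∧ PowerFaulty G c u ∧ QuietSubTree G c u
  | .RC2, c, u => u = r ∧ Detached G r c u ∧ StrongEReady G c u
  | .RC3, c, u => u = r ∧ Conflict G r c u
  | .RC4, c, u => u ≠ r ∧ StrongConflict G c u
  | .RC5, c, u => u ≠ r ∧ ¬ StrongConflict G c u ∧
      (Conflict G r c u ∨ Faulty G r c u ∨ PowerFaulty G c u ∨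
       IllegalLiveRoot G r c u ∨ IllegalChild r c u)
  | .RC6, c, u => u ≠ r ∧ Detached G r c u ∧ Isolated G c u ∧
      ∀ v ∈ G.neighborSet u, (c v).C = (c u).C ∨ (c v).S ≠ Power
  | .R1, c, u => u = r ∧ Ok G r c u ∧ EndLastPhase G c u ∧
      ∀ v ∈ G.neighborSet u, (c v).S ≠ StrongE
  | .R2, c, u => u = r ∧ Ok G r c u ∧ EndIntermediatePhase G c u
  | .R3 v, c, u => u ≠ r ∧ Ok G r c u ∧ Connection G r c u v
  | .R4, c, u => u ≠ r ∧ Ok G r c u ∧ NewPhase G c u ∧ Child G c u ≠ ∅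
  | .R5, c, u => u ≠ r ∧ Ok G r c u ∧ NewPhase G c u ∧ Child G c u = ∅ ∧
      ∀ v ∈ G.neighborSet u, (c v).S ≠ StrongE
  | .R6, c, u => u ≠ r ∧ Ok G r c u ∧ EndIntermediatePhase G c u
  | .R7, c, u => u ≠ r ∧ Ok G r c u ∧ (c u).P ≠ none ∧ EndLastPhase G c u

/-- Phase of the parent of `u` (or `u`'s own phase if it has no parent). -/
def parentPh (c : Config V) (u : V) : Bool :=
  match (c u).P with
  | some p => (c p).ph
  | none => (c u).ph

/-- The action of each rule: the new local state of the executing process `u`. -/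
def execRule (c : Config V) (u : V) : Rule V → ProcState V
  | .RC1 => { c u with S := Working }
  | .RC2 => { c u with S := Working }
  | .RC3 => { c u with S := StrongE }
  | .RC4 => { c u with S := StrongE, P := none }
  | .RC5 => { c u with S := WeakE, P := none }
  | .RC6 => { c u with S := Idle }
  | .R1 => { c u with C := !(c u).C, S := Power }
  | .R2 => { c u with ph := !(c u).ph, S := Working }
  | .R3 v => { c u with C := (c v).C, ph := (c v).ph, S := Idle, P := some v, TS := some v }
  | .R4 => { c u with ph := parentPh c u, S := Working }
  | .R5 => { c u with ph := parentPh c u, S := Power }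
  | .R6 => { c u with S := Idle }
  | .R7 => { c u with S := Idle, P := none }

/-- A computation step: a nonempty set of enabled processes each atomically
executes one enabled rule; all other processes keep their state. -/
def IsStep (G : SimpleGraph V) (r : V) (c1 : Config V)
    (act : V → Option (Rule V)) (c2 : Config V) : Prop :=
  (∃ u ρ, act u = some ρ) ∧
  ∀ u, (act u = none → c2 u = c1 u) ∧
       ∀ ρ, act u = some ρ → Guard G r ρ c1 u ∧ c2 u = execRule c1 u ρ

def Step (G : SimpleGraph V) (r : V) (c1 c2 : Config V) : Prop :=
  ∃ act, IsStep G r c1 act c2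

/-- A process is enabled if the guard of some rule holds at it. -/
def Enabled (G : SimpleGraph V) (r : V) (c : Config V) (u : V) : Prop :=
  ∃ ρ : Rule V, Guard G r ρ c u

/-- Well-formed configurations: pointers designate neighbors, and the root has
no parent and only uses the statuses Power, Working, StrongE. -/
def WellFormed (G : SimpleGraph V) (r : V) (c : Config V) : Prop :=
  (∀ u v, (c u).P = some v → G.Adj u v) ∧
  (∀ u v, (c u).TS = some v → G.Adj u v) ∧
  (c r).P = none ∧ (c r).TS = none ∧
  ((c r).S = Power ∨ (c r).S = Working ∨ (c r).S = StrongE)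

/-- `PowerParent u`: some descendant of `u` (possibly `u`) may take the `Power`
status by a series of R4/R5 moves. -/
inductive PowerParent (c : Config V) : V → Prop
  | base (u p : V) : (c u).P = some p → (c u).S = Idle → (c p).S = Working →
      (c u).ph ≠ (c p).ph → PowerParent c u
  | step (u p : V) : (c u).P = some p → PowerParent c p → (c u).S = Idle →
      (c u).ph = (c p).ph → PowerParent c u

def Influential (c : Config V) (u : V) : Prop :=
  (c u).S = Power ∨ PowerParent c u

/-- `u` lies on a branch rooted at `r` all of whose members are non-faulty,
and the root is not StrongE. -/
inductive InLegalTree (G : SimpleGraph V) (r : V) (c : Config V) : V → Prop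
  | root : (c r).S ≠ StrongE → InLegalTree G r c r
  | child (u p : V) : (c u).P = some p → InLegalTree G r c p →
      ¬ Faulty G r c u → InLegalTree G r c u

def InsideLegalTree (G : SimpleGraph V) (r : V) (c : Config V) (u : V) : Prop :=
  InLegalTree G r c u ∧ (c u).S ≠ Power ∧ Child G c u ≠ ∅

def UnSafe (G : SimpleGraph V) (r : V) (c : Config V) (u : V) : Prop :=
  InsideLegalTree G r c u ∧
    ∃ v ∈ G.neighborSet u, (c v).C ≠ (c u).C ∧ Influential c v

def UnRegular (G : SimpleGraph V) (r : V) (c : Config V) (u : V) : Prop :=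
  ¬ Detached G r c u ∧ ¬ InLegalTree G r c u

/-- Infinite executions of the algorithm (by Theorem `no deadlock` there is no
terminal configuration). -/
structure Execution (G : SimpleGraph V) (r : V) where
  conf : ℕ → Config V
  act : ℕ → V → Option (Rule V)
  valid : ∀ i, IsStep G r (conf i) (act i) (conf (i + 1))

/-- The suffix of an execution starting at time `k`. -/
def Execution.shift {G : SimpleGraph V} {r : V} (e : Execution G r) (k : ℕ) :
    Execution G r where
  conf := fun i => e.conf (k + i)
  act := fun i => e.act (k + i)
  valid := fun i => e.valid (k + i)

/-- The first round of `e` is completed by time `t`: every process enabled in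
the initial configuration has executed a rule or been neutralized before `t`. -/
def CompletesRound (G : SimpleGraph V) (r : V) (e : Execution G r) (t : ℕ) : Prop :=
  ∀ u, Enabled G r (e.conf 0) u →
    ∃ j, j < t ∧ (e.act j u ≠ none ∨ ¬ Enabled G r (e.conf (j + 1)) u)

/-- `RoundsElapsed G r e k t`: at least `k` rounds of `e` are completed by time `t`. -/
def RoundsElapsed (G : SimpleGraph V) (r : V) (e : Execution G r) : ℕ → ℕ → Prop
  | 0, t => t = 0
  | k + 1, t => ∃ s, s ≤ t ∧ RoundsElapsed G r e k s ∧
      CompletesRound G r (e.shift s) (t - s)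

/-- The tree-construction rules R1–R7. -/
def TreeRule : Rule V → Prop := fun ρ =>
  ρ = Rule.R1 ∨ ρ = Rule.R2 ∨ (∃ v, ρ = Rule.R3 v) ∨ ρ = Rule.R4 ∨
  ρ = Rule.R5 ∨ ρ = Rule.R6 ∨ ρ = Rule.R7

noncomputable def FaultyCount (G : SimpleGraph V) (r : V) (c : Config V) : ℕ :=
  {u | Faulty G r c u}.ncard

/-- Inside-safe executions: insideLegalTree processes execute only R1–R7 and
the number of Faulty processes stays constant. -/
def InsideSafeExec (G : SimpleGraph V) (r : V) (e : Execution G r) : Prop :=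
  (∀ i u ρ, InsideLegalTree G r (e.conf i) u → e.act i u = some ρ → TreeRule ρ) ∧
  (∀ i, FaultyCount G r (e.conf i) = FaultyCount G r (e.conf 0))

/-- Safe executions. -/
def SafeExec (G : SimpleGraph V) (r : V) (e : Execution G r) : Prop :=
  (∀ i u ρ, InsideLegalTree G r (e.conf i) u → e.act i u = some ρ → TreeRule ρ) ∧
  (∀ i u, Influential (e.conf i) u → UnRegular G r (e.conf i) u → e.act i u = none) ∧
  (∀ i u, ¬ PowerFaulty G (e.conf i) u → ¬ PowerFaulty G (e.conf (i + 1)) u) ∧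
  (∀ i u, e.act i u ≠ some Rule.RC1 ∧ e.act i u ≠ some Rule.RC4 ∧
      e.act i u ≠ some Rule.RC3 ∧ e.act i u ≠ some Rule.RC2)

/-- Pseudo-regular executions. -/
def PseudoRegularExec (G : SimpleGraph V) (r : V) (e : Execution G r) : Prop :=
  SafeExec G r e ∧
  (∀ i u ρ, InLegalTree G r (e.conf i) u → e.act i u = some ρ → TreeRule ρ) ∧
  (∀ i u, ¬ UnRegular G r (e.conf i) u → ¬ UnRegular G r (e.conf (i + 1)) u)

/-- Regular executions: pseudo-regular and all processes execute only R1–R7. -/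
def RegularExec (G : SimpleGraph V) (r : V) (e : Execution G r) : Prop :=
  PseudoRegularExec G r e ∧ (∀ i u ρ, e.act i u = some ρ → TreeRule ρ)

/-- `u` executes rules infinitely often along `e`. -/
def ActsInfOften {G : SimpleGraph V} {r : V} (e : Execution G r) (u : V) : Prop :=
  ∀ k, ∃ i, k ≤ i ∧ e.act i u ≠ none

def A1 (G : SimpleGraph V) (r : V) (c : Config V) : Prop :=
  ∀ u, ¬ Faulty G r c u ∧ ¬ IllegalLiveRoot G r c u

def A2 (G : SimpleGraph V) (r : V) (c : Config V) : Prop :=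
  A1 G r c ∧ ∀ u, ¬ UnSafe G r c u

def A3 (G : SimpleGraph V) (r : V) (c : Config V) : Prop :=
  A2 G r c ∧ ∀ u, ¬ Influential c u ∨ InLegalTree G r c u

def A4 (G : SimpleGraph V) (r : V) (c : Config V) : Prop :=
  A3 G r c ∧ ∀ u, (c u).S ≠ StrongE

def PIC (r : V) (c : Config V) (u : V) : Prop :=
  Influential c u ∧ (c u).C ≠ (c r).C

def PICPowerParent (r : V) (c : Config V) (u : V) : Prop :=
  PIC r c u ∧ PowerParent c u

/-! The guard of RC5 excludes `StrongConflict`, and for `u ≠ r` a conflict at a process that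
is not `StrongE` is already a strong conflict; so RC5 is executed under `Conflict` only from
the status `StrongE`. RC5 leaves `u` in `WeakE`, and in a safe execution `u` can never become
`StrongE` again, because RC3 and RC4 are the only rules producing that status. -/

end BFS

theorem Nat.exists_forall_ge_notMem_of_finite {ι : Type*} [Finite ι] {s : ι → Set ℕ}
    (hs : ∀ x, (s x).Finite) : ∃ k, ∀ n, k ≤ n → ∀ x, n ∉ s x := by
  have := (Set.finite_iUnion hs).compl_mem_cofinite
  rw [Nat.cofinite_eq_atTop, Filter.mem_atTop_sets] at this
  obtain ⟨k, hk⟩ := this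
  exact ⟨k, fun n hn x hx => hk n hn (Set.mem_iUnion_of_mem x hx)⟩

namespace BFS

open Status

variable {V : Type}

lemma Conflict.status_eq_strongE {G : SimpleGraph V} {r : V} {c : Config V} {u : V}
    (hu : u ≠ r) (hsc : ¬ StrongConflict G c u) (hc : Conflict G r c u) :
    (c u).S = StrongE := by
  by_contra hS
  rcases hc with ⟨-, -, v, hv, hvS, hvC⟩ | ⟨rfl, -⟩
  · exact hsc ⟨hS, v, Set.mem_insert_of_mem _ hv, v, Set.mem_insert_of_mem _ hv, hvC, hvS, hvS⟩
  · exact hu rfl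

lemma execRule_status_ne_strongE (c : Config V) (u : V) {ρ : Rule V}
    (h3 : ρ ≠ Rule.RC3) (h4 : ρ ≠ Rule.RC4) : (execRule c u ρ).S ≠ StrongE := by
  cases ρ <;> simp_all [execRule]

namespace Execution

variable {G : SimpleGraph V} {r : V} (e : Execution G r) {i : ℕ} {u : V}

lemma conf_succ_of_act_eq_none (h : e.act i u = none) : e.conf (i + 1) u = e.conf i u :=
  ((e.valid i).2 u).1 h

lemma conf_succ_of_act_eq_some {ρ : Rule V} (h : e.act i u = some ρ) :
    e.conf (i + 1) u = execRule (e.conf i) u ρ :=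
  (((e.valid i).2 u).2 ρ h).2

lemma guard_of_act_eq_some {ρ : Rule V} (h : e.act i u = some ρ) : Guard G r ρ (e.conf i) u :=
  (((e.valid i).2 u).2 ρ h).1

lemma status_eq_strongE_of_RC5_of_conflict (h : e.act i u = some Rule.RC5)
    (hc : Conflict G r (e.conf i) u) : (e.conf i u).S = StrongE :=
  have ⟨hu, hsc, _⟩ := e.guard_of_act_eq_some h
  Conflict.status_eq_strongE hu hsc hc

end Execution

namespace SafeExec

variable {G : SimpleGraph V} {r : V} {e : Execution G r} (hsafe : SafeExec G r e) {u : V}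
include hsafe

lemma status_succ_ne_strongE {i : ℕ} (h : (e.conf i u).S ≠ StrongE) :
    (e.conf (i + 1) u).S ≠ StrongE := by
  cases hact : e.act i u with
  | none => rwa [e.conf_succ_of_act_eq_none hact]
  | some ρ =>
    obtain ⟨-, h4, h3, -⟩ := hsafe.2.2.2 i u
    rw [e.conf_succ_of_act_eq_some hact]
    exact execRule_status_ne_strongE _ _ (fun h => h3 (h ▸ hact)) (fun h => h4 (h ▸ hact))

lemma status_ne_strongE_of_le {i j : ℕ} (hij : i ≤ j) (h : (e.conf i u).S ≠ StrongE) :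
    (e.conf j u).S ≠ StrongE := by
  induction j, hij using Nat.le_induction with
  | base => exact h
  | succ j _ ih => exact hsafe.status_succ_ne_strongE ih

lemma subsingleton_RC5_conflict (u : V) :
    {i | e.act i u = some Rule.RC5 ∧ Conflict G r (e.conf i) u}.Subsingleton := by
  suffices ∀ i j, e.act i u = some Rule.RC5 → e.act j u = some Rule.RC5 →
      Conflict G r (e.conf j) u → ¬ i < j by
    intro i ⟨hi, hci⟩ j ⟨hj, hcj⟩
    exact le_antisymm (not_lt.1 (this j i hj hi hci)) (not_lt.1 (this i j hi hj hcj))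
  intro i j hi hj hcj hij
  have hweak : (e.conf (i + 1) u).S = WeakE := by
    rw [e.conf_succ_of_act_eq_some hi]; rfl
  exact hsafe.status_ne_strongE_of_le hij (by simp [hweak])
    (e.status_eq_strongE_of_RC5_of_conflict hj hcj)

end SafeExec

theorem stmt10_general {V : Type} [Fintype V]
    (G : SimpleGraph V) (r : V) (e : Execution G r) (hsafe : SafeExec G r e) :
    (∀ u, u ≠ r →
      {i | e.act i u = some Rule.RC5 ∧ Conflict G r (e.conf i) u ∧
        InLegalTree G r (e.conf i) u}.Subsingleton) ∧
    (∃ k, ∀ i, k ≤ i → ∀ u,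
      ¬ (e.act i u = some Rule.RC5 ∧ Conflict G r (e.conf i) u ∧
        InLegalTree G r (e.conf i) u)) := by
  have hsub (u : V) : {i | e.act i u = some Rule.RC5 ∧ Conflict G r (e.conf i) u ∧
      InLegalTree G r (e.conf i) u}.Subsingleton :=
    (hsafe.subsingleton_RC5_conflict u).anti fun _ hi => ⟨hi.1, hi.2.1⟩
  exact ⟨fun u _ => hsub u, Nat.exists_forall_ge_notMem_of_finite fun u => (hsub u).finite⟩

/-- in any safe execution, each process `u ≠ r` executes RC5 in a
configuration satisfying `Conflict(u) ∧ inLegalTree(u)` at most once; hence the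
execution has a suffix where this never happens. -/
theorem stmt10 {V : Type} [Fintype V] [DecidableEq V]
    (G : SimpleGraph V) (r : V) (e : Execution G r) (hsafe : SafeExec G r e) :
    (∀ u, u ≠ r →
      {i | e.act i u = some Rule.RC5 ∧ Conflict G r (e.conf i) u ∧
        InLegalTree G r (e.conf i) u}.Subsingleton) ∧
    (∃ k, ∀ i, k ≤ i → ∀ u,
      ¬ (e.act i u = some Rule.RC5 ∧ Conflict G r (e.conf i) u ∧
        InLegalTree G r (e.conf i) u)) :=
  stmt10_general G r e hsafe

end BFS
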